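/- Let f be a continuous piecewise linear function on a convex closed domain D ⊆ ℝ^d with components g_1,...,g_n (affine linear functions agreeing with f on the pieces). Then there exists a family {K_i}_{i∈I} of subsets of {1,...,n} such that f(x) = max_{i∈I} min_{j∈K_i} g_j(x) for all x ∈ D. -/

import Mathlib

/-- A closed domain in `ℝ^d`: the closure of a nonempty open set. -/
def IsClosedDomain {d : ℕ} (P : Set (Fin d → ℝ)) : Prop :=
  ∃ U : Set (Fin d → ℝ), U.Nonempty ∧ IsOpen U ∧ P = closure U

/-- `f` is piecewise linear on `D`: `D` is a finite union of closed domains on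
each of which `f` agrees with an affine linear function. -/
def IsPLOn {d : ℕ} (D : Set (Fin d → ℝ)) (f : (Fin d → ℝ) → ℝ) : Prop :=
  ∃ 𝒟 : Finset (Set (Fin d → ℝ)),
    (∀ P ∈ 𝒟, IsClosedDomain P) ∧ (⋃ P ∈ 𝒟, P) = D ∧
    ∀ P ∈ 𝒟, ∃ g : (Fin d → ℝ) →ᵃ[ℝ] ℝ, ∀ x ∈ P, f x = g x

/-- `f` coincides on `D` with the max-min lattice polynomial
`x ↦ ⋁_{K ∈ 𝒦} ⋀_{j ∈ K} g j x` for some nonempty family `𝒦` of nonempty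
subsets of `{1,…,n}`. -/
def MaxMinRep {d n : ℕ} (D : Set (Fin d → ℝ)) (g : Fin n → ((Fin d → ℝ) →ᵃ[ℝ] ℝ))
    (f : (Fin d → ℝ) → ℝ) : Prop :=
  ∃ (𝒦 : Finset (Finset (Fin n))) (h𝒦 : 𝒦.Nonempty) (hK : ∀ K ∈ 𝒦, K.Nonempty),
    ∀ x ∈ D, f x = 𝒦.attach.sup' (Finset.attach_nonempty_iff.mpr h𝒦)
      (fun K => K.1.inf' (hK K.1 K.2) (fun j => g j x))

/-!
Let `above x` be the set of components lying above `f` at `x`. Taking `y = x` gives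
`f x ≤ max_y min_{j ∈ above y} g j x`; the reverse inequality says that for all `x y ∈ D` some
component lies above `f` at `y` and below `f` at `x`. On the segment from `y` to `x` this is a
one-dimensional statement. There, let `t` be the largest parameter at which some component lying
above `f` at the start lies below `f`. If `t < 1`, a piece through the point at `t` reaches some
`t' > t`; its component either already lies below `f` at `t'`, or it crosses the previous one
between `t` and `t'`, hence lies above it at the start. Either way `t'` contradicts maximality.
-/

open Set

lemma AffineMap.real_apply (a : ℝ →ᵃ[ℝ] ℝ) (s : ℝ) : a s = a.linear 1 * s + a 0 := by
  rw [congrFun a.decomp s, Pi.add_apply, mul_comm, ← smul_eq_mul, ← a.linear.map_smul,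
    smul_eq_mul, mul_one]

lemma AffineMap.apply_le_apply_of_le_of_gt {a b : ℝ →ᵃ[ℝ] ℝ} {s t t' : ℝ} (hst : s ≤ t)
    (htt' : t < t') (ht : a t ≤ b t) (ht' : b t' < a t') : a s ≤ b s := by
  rw [a.real_apply, b.real_apply] at *
  nlinarith

lemma Finset.exists_mem_inter_nonempty_of_mem_closure {X : Type*} [TopologicalSpace X]
    {𝒟 : Finset (Set X)} (h𝒟 : ∀ P ∈ 𝒟, IsClosed P) {s : Set X} (hs : s ⊆ ⋃ P ∈ 𝒟, P)
    {x : X} (hx : x ∈ closure s) : ∃ P ∈ 𝒟, x ∈ P ∧ (P ∩ s).Nonempty := by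
  have hs' : s = ⋃ P ∈ 𝒟, P ∩ s := by
    rw [← Set.iUnion₂_inter, Set.inter_eq_right.mpr hs]
  rw [hs', 𝒟.closure_biUnion, mem_iUnion₂] at hx
  obtain ⟨P, hP, hxP⟩ := hx
  exact ⟨P, hP, closure_minimal Set.inter_subset_left (h𝒟 P hP) hxP,
    closure_nonempty_iff.mp ⟨x, hxP⟩⟩

theorem exists_ge_at_zero_le_at_one {ι : Type*} [Finite ι] {φ : ℝ → ℝ}
    {ψ : ι → ℝ →ᵃ[ℝ] ℝ} (hφ : ContinuousOn φ (Icc 0 1))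
    (hloc : ∀ t ∈ Ico (0 : ℝ) 1, ∃ j, ∃ t' ∈ Ioc t 1, φ t = ψ j t ∧ φ t' = ψ j t') :
    ∃ j, φ 0 ≤ ψ j 0 ∧ ψ j 1 ≤ φ 1 := by
  set S := ⋃ j ∈ {j | φ 0 ≤ ψ j 0}, {s ∈ Icc (0 : ℝ) 1 | ψ j s ≤ φ s}
  have hSsub : S ⊆ Icc 0 1 := iUnion₂_subset fun _ _ => sep_subset _ _
  have hSclosed : IsClosed S := (toFinite _).isClosed_biUnion fun j _ =>
    isClosed_Icc.isClosed_le (ψ j).continuous_of_finiteDimensional.continuousOn hφ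
  have h0S : (0 : ℝ) ∈ S := by
    obtain ⟨j, -, -, h0, -⟩ := hloc 0 ⟨le_rfl, zero_lt_one⟩
    exact mem_biUnion h0.le ⟨left_mem_Icc.mpr zero_le_one, h0.ge⟩
  have hSbdd : BddAbove S := bddAbove_Icc.mono hSsub
  obtain ⟨j₀, hj₀, ht, hj₀t⟩ := mem_iUnion₂.mp (hSclosed.csSup_mem ⟨0, h0S⟩ hSbdd)
  set t := sSup S
  rcases ht.2.eq_or_lt with ht1 | ht1
  · exact ⟨j₀, hj₀, ht1 ▸ hj₀t⟩
  obtain ⟨j, t', ht', hjt, hjt'⟩ := hloc t ⟨ht.1, ht1⟩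
  suffices ∃ k, φ 0 ≤ ψ k 0 ∧ ψ k t' ≤ φ t' by
    obtain ⟨k, hk0, hkt'⟩ := this
    have : t' ≤ t := le_csSup hSbdd (mem_biUnion hk0 ⟨⟨ht.1.trans ht'.1.le, ht'.2⟩, hkt'⟩)
    exact absurd ht'.1 this.not_gt
  by_cases hj₀t' : ψ j₀ t' ≤ φ t'
  · exact ⟨j₀, hj₀, hj₀t'⟩
  have : ψ j₀ 0 ≤ ψ j 0 := AffineMap.apply_le_apply_of_le_of_gt ht.1 ht'.1 (hjt ▸ hj₀t)
    (hjt' ▸ not_le.mp hj₀t')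
  exact ⟨j, le_trans hj₀ this, hjt'.ge⟩

theorem Convex.exists_ge_and_le_of_isClosed_pieces {E ι : Type*} [AddCommGroup E] [Module ℝ E]
    [TopologicalSpace E] [IsTopologicalAddGroup E] [ContinuousSMul ℝ E] [Finite ι]
    {D : Set E} (hD : Convex ℝ D) {f : E → ℝ} (hf : ContinuousOn f D) {g : ι → E →ᵃ[ℝ] ℝ}
    {𝒟 : Finset (Set E)} (hclosed : ∀ P ∈ 𝒟, IsClosed P) (hcover : D ⊆ ⋃ P ∈ 𝒟, P)
    (hagree : ∀ P ∈ 𝒟, ∃ j, ∀ x ∈ P, f x = g j x) {x y : E} (hx : x ∈ D) (hy : y ∈ D) :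
    ∃ j, f x ≤ g j x ∧ g j y ≤ f y := by
  set z : ℝ →ᵃ[ℝ] E := AffineMap.lineMap x y
  have hz : Continuous z := AffineMap.lineMap_continuous
  have hzD : MapsTo z (Icc 0 1) D := fun s hs => hD.lineMap_mem hx hy hs
  obtain ⟨j, hj0, hj1⟩ := exists_ge_at_zero_le_at_one (ψ := fun j => (g j).comp z)
    (hf.comp hz.continuousOn hzD) fun t ht => by
      have hzt : z t ∈ closure (z '' Ioc t 1) := image_closure_subset_closure_image hz
        ⟨t, by rw [closure_Ioc ht.2.ne]; exact ⟨le_rfl, ht.2.le⟩, rfl⟩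
      have hsub : z '' Ioc t 1 ⊆ ⋃ P ∈ 𝒟, P :=
        (hzD.mono_left (Ioc_subset_Icc_self.trans (Icc_subset_Icc_left ht.1))).image_subset.trans
          hcover
      obtain ⟨P, hP, hztP, -, hzt'P, t', ht', rfl⟩ :=
        𝒟.exists_mem_inter_nonempty_of_mem_closure hclosed hsub hzt
      obtain ⟨j, hj⟩ := hagree P hP
      exact ⟨j, t', ht', hj _ hztP, hj _ hzt'P⟩
  exact ⟨j, by simpa [z] using hj0, by simpa [z] using hj1⟩

lemma IsClosedDomain.nonempty {d : ℕ} {P : Set (Fin d → ℝ)} (hP : IsClosedDomain P) :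
    P.Nonempty := by
  obtain ⟨U, hU, -, rfl⟩ := hP
  exact hU.closure

lemma IsClosedDomain.isClosed {d : ℕ} {P : Set (Fin d → ℝ)} (hP : IsClosedDomain P) :
    IsClosed P := by
  obtain ⟨U, -, -, rfl⟩ := hP
  exact isClosed_closure

lemma maxMinRep_of_exists_ge_le {d n : ℕ} {D : Set (Fin d → ℝ)} (hD : D.Nonempty)
    {f : (Fin d → ℝ) → ℝ} {g : Fin n → (Fin d → ℝ) →ᵃ[ℝ] ℝ}
    (h : ∀ x ∈ D, ∀ y ∈ D, ∃ j, f x ≤ g j x ∧ g j y ≤ f y) : MaxMinRep D g f := by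
  classical
  let above (x : Fin d → ℝ) : Finset (Fin n) := {j | f x ≤ g j x}
  have mem_above {x j} : j ∈ above x ↔ f x ≤ g j x := by simp [above]
  refine ⟨({K | ∃ x ∈ D, above x = K} : Finset _), ?_, ?_, fun x hx => le_antisymm ?_ ?_⟩
  · obtain ⟨x, hx⟩ := hD
    exact ⟨above x, by simpa using ⟨x, hx, rfl⟩⟩
  · simp only [Finset.mem_filter, Finset.mem_univ, true_and, forall_exists_index, and_imp]
    rintro _ x hx rfl
    obtain ⟨j, hj, -⟩ := h x hx x hx
    exact ⟨j, mem_above.mpr hj⟩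
  · exact Finset.le_sup'_of_le _ (b := ⟨above x, by simpa using ⟨x, hx, rfl⟩⟩)
      (Finset.mem_attach _ _) (Finset.le_inf' _ _ fun j hj => mem_above.mp hj)
  · refine Finset.sup'_le _ _ fun ⟨K, hK⟩ _ => ?_
    obtain ⟨y, hy, rfl⟩ := by simpa using hK
    obtain ⟨j, hj, hjx⟩ := h y hy x hx
    exact Finset.inf'_le_of_le _ (mem_above.mpr hj) hjx

theorem pl_maxMinRep_general {d n : ℕ} (D : Set (Fin d → ℝ)) (hconv : Convex ℝ D)
    (hdom : IsClosedDomain D) (f : (Fin d → ℝ) → ℝ) (hf : ContinuousOn f D)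
    (g : Fin n → ((Fin d → ℝ) →ᵃ[ℝ] ℝ)) (𝒟 : Finset (Set (Fin d → ℝ)))
    (hpieces : ∀ P ∈ 𝒟, IsClosedDomain P) (hcover : (⋃ P ∈ 𝒟, P) = D)
    (hagree : ∀ P ∈ 𝒟, ∃ j : Fin n, ∀ x ∈ P, f x = g j x) :
    MaxMinRep D g f :=
  maxMinRep_of_exists_ge_le hdom.nonempty fun _ hx _ hy =>
    hconv.exists_ge_and_le_of_isClosed_pieces hf (fun P hP => (hpieces P hP).isClosed)
      hcover.ge hagree hx hy

/-- A continuous piecewise linear function on a convex closed domain `D ⊆ ℝ^d`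
with components `g 1, …, g n` is a max-min lattice polynomial in its components. -/
theorem pl_maxMinRep {d n : ℕ} (D : Set (Fin d → ℝ)) (hconv : Convex ℝ D)
    (hdom : IsClosedDomain D) (f : (Fin d → ℝ) → ℝ) (hf : ContinuousOn f D)
    (g : Fin n → ((Fin d → ℝ) →ᵃ[ℝ] ℝ)) (𝒟 : Finset (Set (Fin d → ℝ)))
    (hpieces : ∀ P ∈ 𝒟, IsClosedDomain P) (hcover : (⋃ P ∈ 𝒟, P) = D)
    (hagree : ∀ P ∈ 𝒟, ∃ j : Fin n, ∀ x ∈ P, f x = g j x)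
    (hcomp : ∀ j : Fin n, ∃ P ∈ 𝒟, ∀ x ∈ P, f x = g j x) :
    MaxMinRep D g f :=
  pl_maxMinRep_general D hconv hdom f hf g 𝒟 hpieces hcover hagree
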